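/- Let G be a finite group, N ⊴ G a normal subgroup, and H a finite group with an isomorphism α : R(G) → R(H) of subrack lattices. Then the images under α of the cosets of N (the atoms of the copy of R(G/N) inside R(G)) form a partition of H into parts of equal cardinality, and the block containing the image of N itself is a union of conjugacy classes of H containing a central element. -/

import Mathlib

open scoped Pointwise

/-- A subset of a group closed under conjugation by its own elements. -/
def IsSubrack {G : Type*} [Group G] (S : Set G) : Prop :=
  ∀ a ∈ S, ∀ b ∈ S, a * b * a⁻¹ ∈ S

/-- The subrack lattice of a group, as a poset of conjugation-closed subsets. -/
def SubrackLattice (G : Type*) [Group G] : Type _ := {S : Set G // IsSubrack S}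

instance {G : Type*} [Group G] : PartialOrder (SubrackLattice G) :=
  Subtype.partialOrder _

/-!
An isomorphism of subrack lattices preserves the bottom element `∅`, hence the atoms, which are
the singletons; so it is induced by a bijection `e : G ≃ H` that maps subracks onto subracks.
Writing the cosets of `N` as fibres of `G → G ⧸ N`, their images partition `H` into blocks of
size `|N|`. The block `B = e '' N` is closed under conjugation by its own elements. For `g` in
another block `B' = e '' (a • N)`, the subrack `N ∪ a • N` (a fibre of the subrack `{1, a}` of
`G ⧸ N`) maps to `B ∪ B'`; conjugation by `g` permutes the finite set `B'`, so it cannot move a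
point of `B` into `B'`. Finally `{1, a}` is a subrack of `G`, so `{e 1, e a}` is one of `H`, and
the two elements of a subrack of size two commute: `e 1` is central.
-/

section IsSubrack

variable {G H : Type*} [Group G] [Group H]

lemma isSubrack_singleton (x : G) : IsSubrack ({x} : Set G) := by
  rintro a rfl b rfl
  simp

lemma isSubrack_pair_one (a : G) : IsSubrack ({1, a} : Set G) := by
  intro u hu v hv
  simp only [Set.mem_insert_iff, Set.mem_singleton_iff] at hu hv
  rcases hu with rfl | rfl <;> rcases hv with rfl | rfl <;> simp

lemma IsSubrack.preimage {S : Set H} (hS : IsSubrack S) (f : G →* H) :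
    IsSubrack (f ⁻¹' S) := by
  intro a ha b hb
  simpa using hS _ ha _ hb

lemma isSubrack_union_leftCoset (N : Subgroup G) [N.Normal] (a : G) :
    IsSubrack ((N : Set G) ∪ a • N) := by
  have hpre : (N : Set G) ∪ a • N = QuotientGroup.mk' N ⁻¹' {1, (a : G ⧸ N)} := by
    ext x
    simp [mem_leftCoset_iff, QuotientGroup.eq, QuotientGroup.eq_one_iff,
      ← N.inv_mem_iff (x := x⁻¹ * a)]
  exact hpre ▸ (isSubrack_pair_one _).preimage _

lemma IsSubrack.commute_of_pair {x y : G} (h : IsSubrack ({x, y} : Set G)) : Commute x y := by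
  rcases h x (by simp) y (by simp) with hxy | hxy
  · rw [mul_inv_eq_iff_eq_mul, mul_right_inj] at hxy
    rw [hxy]
  · exact mul_inv_eq_iff_eq_mul.mp hxy

lemma IsSubrack.conj_mem_of_union [Finite G] {A B : Set G} (hB : IsSubrack B)
    (hAB : IsSubrack (A ∪ B)) (hdisj : Disjoint A B) {g x : G} (hg : g ∈ B) (hx : x ∈ A) :
    g * x * g⁻¹ ∈ A := by
  have hmaps : Set.MapsTo (fun t => g * t * g⁻¹) B B := fun t ht => hB g hg t ht
  have hinj : Function.Injective (fun t => g * t * g⁻¹) := fun u v h => by simpa using h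
  obtain ⟨-, -, hsurj⟩ := (B.toFinite.injOn_iff_bijOn_of_mapsTo hmaps).mp hinj.injOn
  refine (hAB g (Or.inr hg) x (Or.inl hx)).resolve_right fun hgx => ?_
  obtain ⟨b, hb, hbx⟩ := hsurj hgx
  exact hdisj.notMem_of_mem_left hx (hinj hbx ▸ hb)

end IsSubrack

namespace SubrackLattice

variable {G H : Type*} [Group G] [Group H]

instance : OrderBot (SubrackLattice G) where
  bot := ⟨∅, fun _ ha => ha.elim⟩
  bot_le S := Set.empty_subset S.val

def single (x : G) : SubrackLattice G := ⟨{x}, isSubrack_singleton x⟩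

lemma single_le_iff {x : G} {S : SubrackLattice G} : single x ≤ S ↔ x ∈ S.val :=
  Set.singleton_subset_iff

lemma single_injective : Function.Injective (single : G → SubrackLattice G) :=
  fun _ _ h => Set.singleton_injective (congrArg Subtype.val h)

lemma isAtom_iff {S : SubrackLattice G} : IsAtom S ↔ ∃ x, S = single x := by
  constructor
  · rintro ⟨hS, hmin⟩
    obtain ⟨x, hx⟩ : S.val.Nonempty :=
      Set.nonempty_iff_ne_empty.mpr fun h => hS (Subtype.ext h)
    refine ⟨x, ((single_le_iff.mpr hx).eq_or_lt.resolve_right fun hlt => ?_).symm⟩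
    exact Set.singleton_ne_empty x (congrArg Subtype.val (hmin _ hlt))
  · rintro ⟨x, rfl⟩
    refine ⟨fun h => Set.singleton_ne_empty x (congrArg Subtype.val h), fun T hT => ?_⟩
    rcases Set.subset_singleton_iff_eq.mp hT.le with h | h
    · exact Subtype.ext h
    · exact absurd (Subtype.ext h) hT.ne

variable (α : SubrackLattice G ≃o SubrackLattice H)

lemma exists_map_single (x : G) : ∃ y, α (single x) = single y :=
  isAtom_iff.mp ((α.isAtom_iff _).mpr (isAtom_iff.mpr ⟨x, rfl⟩))

noncomputable def pointMap (x : G) : H := (exists_map_single α x).choose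

lemma map_single (x : G) : α (single x) = single (pointMap α x) :=
  (exists_map_single α x).choose_spec

lemma pointMap_symm_pointMap (x : G) : pointMap α.symm (pointMap α x) = x :=
  single_injective <| by rw [← map_single, ← map_single, α.symm_apply_apply]

noncomputable def pointEquiv : G ≃ H where
  toFun := pointMap α
  invFun := pointMap α.symm
  left_inv := pointMap_symm_pointMap α
  right_inv := pointMap_symm_pointMap α.symm

lemma val_apply (S : SubrackLattice G) : (α S).val = pointEquiv α '' S.val := by
  ext y
  rw [Equiv.image_eq_preimage_symm, Set.mem_preimage, ← single_le_iff, ← single_le_iff,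
    ← α.symm_apply_le, map_single]
  rfl

lemma val_apply_mk (S : Set G) (hS : IsSubrack S) :
    (α ⟨S, hS⟩).val = pointEquiv α '' S :=
  val_apply α ⟨S, hS⟩

lemma isSubrack_image {S : Set G} (hS : IsSubrack S) : IsSubrack (pointEquiv α '' S) :=
  val_apply_mk α S hS ▸ (α ⟨S, hS⟩).2

end SubrackLattice

theorem stmt12_general {G H : Type*} [Group G] [Group H] [Finite H]
    (N : Subgroup G) [N.Normal]
    (hcoset : ∀ c : G, IsSubrack (c • (N : Set G)))
    (α : SubrackLattice G ≃o SubrackLattice H) :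
    ((⋃ c : G, (α ⟨c • (N : Set G), hcoset c⟩).val)
        = Set.univ) ∧
    (∀ c d : G,
      (α ⟨c • (N : Set G), hcoset c⟩).val =
          (α ⟨d • (N : Set G), hcoset d⟩).val ∨
      Disjoint (α ⟨c • (N : Set G), hcoset c⟩).val
          (α ⟨d • (N : Set G), hcoset d⟩).val) ∧
    (∀ c d : G,
      Nat.card (α ⟨c • (N : Set G), hcoset c⟩).val =
        Nat.card (α ⟨d • (N : Set G), hcoset d⟩).val) ∧
    (∀ x ∈ (α ⟨(1 : G) • (N : Set G), hcoset 1⟩).val,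
      ∀ g : H, g * x * g⁻¹ ∈
        (α ⟨(1 : G) • (N : Set G), hcoset 1⟩).val) ∧
    (∃ z ∈ (α ⟨(1 : G) • (N : Set G), hcoset 1⟩).val,
      ∀ h : H, h * z = z * h) := by
  simp only [SubrackLattice.val_apply_mk α]
  set e := SubrackLattice.pointEquiv α
  have hmem (c : G) : c ∈ c • (N : Set G) := mem_own_leftCoset N.toSubmonoid c
  have hfibre (c : G) : c • (N : Set G) = QuotientGroup.mk ⁻¹' {(c : G ⧸ N)} :=
    (QuotientGroup.eq_class_eq_leftCoset N c).symm
  have hdisj {c d : G} (h : (c : G ⧸ N) ≠ d) : Disjoint (e '' (c • N)) (e '' (d • N)) := by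
    rw [Set.disjoint_image_iff e.injective, hfibre, hfibre]
    exact (Set.disjoint_singleton.mpr h).preimage _
  refine ⟨?_, fun c d => ?_, fun c d => ?_, fun x hx g => ?_, ?_⟩
  · rw [← Set.image_iUnion, Set.iUnion_eq_univ_iff.mpr fun x => ⟨x, hmem x⟩,
      Set.image_univ, e.range_eq_univ]
  · by_cases h : (c : G ⧸ N) = d
    · exact Or.inl (by rw [hfibre c, hfibre d, h])
    · exact Or.inr (hdisj h)
  · simp only [Nat.card_image_equiv, Set.natCard_smul_set]
  · obtain ⟨a, rfl⟩ := e.surjective g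
    by_cases h : ((1 : G) : G ⧸ N) = a
    · have ha : e a ∈ e '' ((1 : G) • N) := by
        rw [hfibre, h, ← hfibre]
        exact Set.mem_image_of_mem e (hmem a)
      exact SubrackLattice.isSubrack_image α (hcoset 1) _ ha _ hx
    · have hunion : IsSubrack (e '' ((1 : G) • N) ∪ e '' (a • N)) := by
        rw [← Set.image_union, one_smul]
        exact SubrackLattice.isSubrack_image α (isSubrack_union_leftCoset N a)
      exact (SubrackLattice.isSubrack_image α (hcoset a)).conj_mem_of_union hunion (hdisj h)
        (Set.mem_image_of_mem e (hmem a)) hx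
  · refine ⟨e 1, Set.mem_image_of_mem e (hmem 1), fun h => ?_⟩
    obtain ⟨a, rfl⟩ := e.surjective h
    have hpair := SubrackLattice.isSubrack_image α (isSubrack_pair_one a)
    rw [Set.image_pair] at hpair
    exact hpair.commute_of_pair.symm

/-- Given an isomorphism α : R(G) ≅ R(H) and a normal subgroup N of G, the images
under α of the cosets of N partition H into parts of equal cardinality, and the
block α(N) is a union of conjugacy classes of H containing a central element. -/
theorem stmt12 {G H : Type*} [Group G] [Group H] [Finite G] [Finite H]
    (N : Subgroup G) [N.Normal]
    (hcoset : ∀ c : G, IsSubrack (c • (N : Set G)))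
    (α : SubrackLattice G ≃o SubrackLattice H) :
    ((⋃ c : G, (α ⟨c • (N : Set G), hcoset c⟩).val)
        = Set.univ) ∧
    (∀ c d : G,
      (α ⟨c • (N : Set G), hcoset c⟩).val =
          (α ⟨d • (N : Set G), hcoset d⟩).val ∨
      Disjoint (α ⟨c • (N : Set G), hcoset c⟩).val
          (α ⟨d • (N : Set G), hcoset d⟩).val) ∧
    (∀ c d : G,
      Nat.card (α ⟨c • (N : Set G), hcoset c⟩).val =
        Nat.card (α ⟨d • (N : Set G), hcoset d⟩).val) ∧
    (∀ x ∈ (α ⟨(1 : G) • (N : Set G), hcoset 1⟩).val,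
      ∀ g : H, g * x * g⁻¹ ∈
        (α ⟨(1 : G) • (N : Set G), hcoset 1⟩).val) ∧
    (∃ z ∈ (α ⟨(1 : G) • (N : Set G), hcoset 1⟩).val,
      ∀ h : H, h * z = z * h) :=
  stmt12_general N hcoset α
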